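/- Let φ : G → H be a homomorphism of abelian groups, and let A, B ⊆ G be finite non-empty subsets. For x, y ∈ H write A_x := A ∩ φ^{-1}(x), B_y := B ∩ φ^{-1}(y), α_x := |A_x|/|A| and β_y := |B_y|/|B|. Write k := d_ent(U_A, U_B), k̄ := d_ent(φ(U_A), φ(U_B)), and M := H(φ(U_A)) + H(φ(U_B)). Then there exist x, y ∈ H such that A_x and B_y are non-empty and k̄ · log(1/(α_x β_y)) ≤ M · (k − d_ent(U_{A_x}, U_{B_y})). -/

import Mathlib

open Finset

noncomputable section

/-- `IsPMF p`: the finitely supported function `p` is a probability mass function,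
modelling the distribution of a random variable taking values in a finite subset. -/
def IsPMF {G : Type*} (p : G →₀ ℝ) : Prop :=
  (∀ x, 0 ≤ p x) ∧ ∑ x ∈ p.support, p x = 1

/-- Shannon entropy `H(X)` of a random variable with distribution `p`. -/
def ent {G : Type*} (p : G →₀ ℝ) : ℝ :=
  ∑ x ∈ p.support, Real.negMulLog (p x)

/-- The joint distribution of a pair of independent random variables with
distributions `p` and `q`. -/
def prodPMF {G H : Type*} (p : G →₀ ℝ) (q : H →₀ ℝ) : (G × H) →₀ ℝ :=
  Finsupp.onFinset (p.support ×ˢ q.support) (fun z => p z.1 * q z.2)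
    (fun _z hz => Finset.mem_product.2
      ⟨Finsupp.mem_support_iff.2 (left_ne_zero_of_mul hz),
       Finsupp.mem_support_iff.2 (right_ne_zero_of_mul hz)⟩)

/-- The distribution of `X - Y`, where `X, Y` are independent with distributions `p, q`. -/
def subDist {G : Type*} [AddCommGroup G] (p q : G →₀ ℝ) : G →₀ ℝ :=
  Finsupp.mapDomain (fun z : G × G => z.1 - z.2) (prodPMF p q)

/-- The distribution of `X + Y`, where `X, Y` are independent with distributions `p, q`. -/
def sumDist {G : Type*} [AddCommGroup G] (p q : G →₀ ℝ) : G →₀ ℝ :=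
  Finsupp.mapDomain (fun z : G × G => z.1 + z.2) (prodPMF p q)

/-- The entropic Ruzsa distance `d_ent(X, Y) = H(X' - Y') - H(X)/2 - H(Y)/2`,
where `X', Y'` are independent copies of `X ~ p`, `Y ~ q`. -/
def dEnt {G : Type*} [AddCommGroup G] (p q : G →₀ ℝ) : ℝ :=
  ent (subDist p q) - ent p / 2 - ent q / 2

/-- The entropic doubling constant `σ_ent[X] = exp(H(X₁ + X₂) - H(X))`
for independent copies `X₁, X₂` of `X ~ p`. -/
def sigmaEnt {G : Type*} [AddCommGroup G] (p : G →₀ ℝ) : ℝ :=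
  Real.exp (ent (sumDist p p) - ent p)

/-- First marginal of a joint distribution on `G × H`. -/
def fstMarg {G H : Type*} (w : (G × H) →₀ ℝ) : G →₀ ℝ :=
  Finsupp.mapDomain Prod.fst w

/-- Second marginal of a joint distribution on `G × H`. -/
def sndMarg {G H : Type*} (w : (G × H) →₀ ℝ) : H →₀ ℝ :=
  Finsupp.mapDomain Prod.snd w

/-- The maximal entropic Ruzsa distance `d*_ent(X, Y)`: the supremum of
`H(X' - Y') - H(X)/2 - H(Y)/2` over all couplings `(X', Y')` of `X ~ p` and `Y ~ q`. -/
def dEntStar {G : Type*} [AddCommGroup G] (p q : G →₀ ℝ) : ℝ :=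
  sSup { d : ℝ | ∃ w : (G × G) →₀ ℝ, IsPMF w ∧ fstMarg w = p ∧ sndMarg w = q ∧
    d = ent (Finsupp.mapDomain (fun z : G × G => z.1 - z.2) w) - ent p / 2 - ent q / 2 }

/-- The uniform distribution on a finite set `A`. -/
def unif {G : Type*} [DecidableEq G] (A : Finset G) : G →₀ ℝ :=
  Finsupp.onFinset A (fun x => if x ∈ A then ((A.card : ℝ))⁻¹ else 0)
    (fun x hx => by by_contra h; exact hx (if_neg h))

/-- The distribution of `X` conditioned on the event `π(X) = y`, where `X ~ p`. -/
def condFiber {G H : Type*} [DecidableEq H] (π : G → H) (y : H) (p : G →₀ ℝ) : G →₀ ℝ :=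
  Finsupp.onFinset p.support
    (fun x => if π x = y then p x / (Finsupp.mapDomain π p) y else 0)
    (fun x hx => Finsupp.mem_support_iff.2 (fun h0 => hx (by (try simp only []); split_ifs <;> simp [h0])))

/-- The entropy `h(p)` of the Bernoulli distribution with parameter `p`. -/
def binEnt (p : ℝ) : ℝ := Real.negMulLog p + Real.negMulLog (1 - p)

/-- Skew-dimension bound: `skewDimLE A r` means the skew-dimension of `A ⊆ ℤ^D`
is at most `r`. -/
def skewDimLE {D : ℕ} : Finset (Fin D → ℤ) → ℕ → Prop
  | A, 0 => A.card ≤ 1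
  | A, r + 1 => A.card ≤ 1 ∨ ∃ i : Fin D, ∀ n : ℤ,
      skewDimLE (A.filter fun v => v i = n) r

/-- The (affine) dimension of a finite subset `A ⊆ ℤ^D`: the dimension of the
real span of `A - A`. -/
def dimAff {D : ℕ} (A : Finset (Fin D → ℤ)) : ℕ :=
  Module.finrank ℝ (Submodule.span ℝ
    { x : Fin D → ℝ | ∃ a ∈ A, ∃ b ∈ A, x = fun i => ((a i : ℝ) - (b i : ℝ)) })



/-!
Write `c_{xy} = α_x β_y` for the law of `(φ(U_A), φ(U_B))`. Then `U_A - U_B` is the `c`-mixture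
of the laws of `U_{A_x} - U_{B_y}`, and the `(x, y)`-component lives on the fibre
`φ⁻¹(x - y)`. The log-sum inequality on each fibre gives
`H(U_A - U_B) ≥ H(φ(U_A) - φ(U_B)) + ∑ c_{xy} H(U_{A_x} - U_{B_y})`, and together with
`H(U_A) = H(φ(U_A)) + ∑ α_x log |A_x|` this reads `k̄ ≤ k - ∑ c_{xy} d_ent(U_{A_x}, U_{B_y})`.
Since moreover `∑ c_{xy} log (1 / (α_x β_y)) = M ≥ 0`, the `c`-average of
`M (k - d_ent(U_{A_x}, U_{B_y})) - k̄ log (1 / (α_x β_y))` is at least `M k̄ - k̄ M = 0`,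
so one of its terms with `c_{xy} > 0` is nonnegative.
-/

section Basic

variable {G H : Type*}

theorem ent_eq_sum_of_support_subset {p : G →₀ ℝ} {S : Finset G} (hS : p.support ⊆ S) :
    ent p = ∑ x ∈ S, Real.negMulLog (p x) :=
  sum_subset hS fun x _ hx => by rw [Finsupp.notMem_support_iff.mp hx, Real.negMulLog_zero]

theorem mapDomain_apply_eq_sum [DecidableEq H] (f : G → H) {p : G →₀ ℝ} {S : Finset G}
    (hS : p.support ⊆ S) (y : H) :
    Finsupp.mapDomain f p y = ∑ x ∈ S with f x = y, p x := by
  rw [Finsupp.mapDomain, Finsupp.sum_apply, Finsupp.sum, sum_filter]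
  refine sum_subset hS (fun x _ hx => ?_) |>.trans (sum_congr rfl fun x _ => ?_)
  · simp [Finsupp.notMem_support_iff.mp hx]
  · simp [Finsupp.single_apply]

theorem prodPMF_apply (p : G →₀ ℝ) (q : H →₀ ℝ) (z : G × H) : prodPMF p q z = p z.1 * q z.2 :=
  rfl

theorem prodPMF_support_subset (p : G →₀ ℝ) (q : H →₀ ℝ) :
    (prodPMF p q).support ⊆ p.support ×ˢ q.support :=
  Finsupp.support_onFinset_subset

theorem unif_apply [DecidableEq G] (A : Finset G) (a : G) :
    unif A a = if a ∈ A then ((A.card : ℝ))⁻¹ else 0 :=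
  rfl

theorem unif_support_subset [DecidableEq G] (A : Finset G) : (unif A).support ⊆ A :=
  Finsupp.support_onFinset_subset

theorem ent_unif [DecidableEq G] (A : Finset G) : ent (unif A) = Real.log A.card := by
  rw [ent_eq_sum_of_support_subset (unif_support_subset A),
    sum_congr rfl fun a ha => by rw [unif_apply, if_pos ha], sum_const, nsmul_eq_mul,
    Real.negMulLog, Real.log_inv]
  rcases A.eq_empty_or_nonempty with rfl | hA
  · simp
  · have := hA.card_ne_zero
    field_simp

theorem mapDomain_unif_apply [DecidableEq G] [DecidableEq H] (f : G → H) (A : Finset G) (x : H) :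
    Finsupp.mapDomain f (unif A) x = ({a ∈ A | f a = x}.card : ℝ) / A.card := by
  rw [mapDomain_apply_eq_sum f (unif_support_subset A),
    sum_congr rfl fun a ha => by rw [unif_apply, if_pos (mem_filter.1 ha).1]]
  simp [div_eq_mul_inv]

end Basic

section PMF

variable {G H : Type*}

theorem IsPMF.sum_eq_one {p : G →₀ ℝ} (hp : IsPMF p) {S : Finset G} (hS : p.support ⊆ S) :
    ∑ x ∈ S, p x = 1 :=
  (sum_subset hS fun _ _ hx => Finsupp.notMem_support_iff.mp hx).symm.trans hp.2

theorem IsPMF.ent_nonneg {p : G →₀ ℝ} (hp : IsPMF p) : 0 ≤ ent p :=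
  sum_nonneg fun x hx => Real.negMulLog_nonneg (hp.1 x)
    (hp.2 ▸ single_le_sum (fun y _ => hp.1 y) hx)

theorem isPMF_unif [DecidableEq G] {A : Finset G} (hA : A.Nonempty) : IsPMF (unif A) := by
  refine ⟨fun a => by rw [unif_apply]; split_ifs <;> positivity, ?_⟩
  rw [sum_subset (unif_support_subset A) fun a _ ha => Finsupp.notMem_support_iff.mp ha,
    sum_congr rfl fun a ha => by rw [unif_apply, if_pos ha]]
  simp [hA.card_ne_zero]

theorem IsPMF.mapDomain {p : G →₀ ℝ} (hp : IsPMF p) (f : G → H) :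
    IsPMF (Finsupp.mapDomain f p) := by
  classical
  have happly := mapDomain_apply_eq_sum f (subset_refl p.support)
  refine ⟨fun y => happly y ▸ sum_nonneg fun x _ => hp.1 x, ?_⟩
  rw [← hp.sum_eq_one subset_rfl, sum_subset Finsupp.mapDomain_support
      fun y _ hy => Finsupp.notMem_support_iff.mp hy, sum_congr rfl fun y _ => happly y,
    sum_fiberwise_of_maps_to fun x hx => mem_image_of_mem f hx]

theorem IsPMF.prodPMF {p : G →₀ ℝ} {q : H →₀ ℝ} (hp : IsPMF p) (hq : IsPMF q) :
    IsPMF (prodPMF p q) := by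
  refine ⟨fun z => mul_nonneg (hp.1 z.1) (hq.1 z.2), ?_⟩
  rw [sum_subset (prodPMF_support_subset p q)
      fun z _ hz => Finsupp.notMem_support_iff.mp hz, sum_product]
  simp only [prodPMF_apply]
  rw [← sum_mul_sum, hp.2, hq.2, one_mul]

theorem IsPMF.subDist [AddCommGroup G] {p q : G →₀ ℝ} (hp : IsPMF p)
    (hq : IsPMF q) : IsPMF (subDist p q) :=
  (hp.prodPMF hq).mapDomain _

end PMF

section Sub

variable {G H ι κ : Type*}

theorem mapDomain_prodPMF {G' H' : Type*} (f : G → G') (g : H → H') (p : G →₀ ℝ) (q : H →₀ ℝ) :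
    Finsupp.mapDomain (Prod.map f g) (prodPMF p q)
      = prodPMF (Finsupp.mapDomain f p) (Finsupp.mapDomain g q) := by
  classical
  ext ⟨x, y⟩
  rw [mapDomain_apply_eq_sum _ (prodPMF_support_subset p q), prodPMF_apply,
    mapDomain_apply_eq_sum f subset_rfl, mapDomain_apply_eq_sum g subset_rfl, sum_mul_sum,
    ← sum_product']
  refine sum_congr ?_ fun _ _ => rfl
  ext z
  simp only [mem_filter, mem_product, Prod.map, Prod.mk.injEq]
  tauto

theorem mapDomain_subDist [AddCommGroup G] [AddCommGroup H] (φ : G →+ H) (p q : G →₀ ℝ) :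
    Finsupp.mapDomain φ (subDist p q)
      = subDist (Finsupp.mapDomain φ p) (Finsupp.mapDomain φ q) := by
  rw [subDist, subDist, ← mapDomain_prodPMF, ← Finsupp.mapDomain_comp, ← Finsupp.mapDomain_comp]
  congr 1
  ext z
  simp

theorem subDist_sum_smul [AddCommGroup G] (s : Finset ι) (t : Finset κ)
    (a : ι → ℝ) (b : κ → ℝ) (p : ι → G →₀ ℝ) (q : κ → G →₀ ℝ) :
    subDist (∑ i ∈ s, a i • p i) (∑ j ∈ t, b j • q j)
      = ∑ ij ∈ s ×ˢ t, (a ij.1 * b ij.2) • subDist (p ij.1) (q ij.2) := by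
  have hprod : prodPMF (∑ i ∈ s, a i • p i) (∑ j ∈ t, b j • q j)
      = ∑ ij ∈ s ×ˢ t, (a ij.1 * b ij.2) • prodPMF (p ij.1) (q ij.2) := by
    ext z
    simp only [prodPMF_apply, Finsupp.finsetSum_apply, Finsupp.smul_apply, smul_eq_mul,
      sum_mul_sum, sum_product]
    exact sum_congr rfl fun i _ => sum_congr rfl fun j _ => by ring
  simp only [subDist, hprod, Finsupp.mapDomain_finsetSum, Finsupp.mapDomain_smul]

theorem subDist_support_subset [AddCommGroup G] [DecidableEq G] (p q : G →₀ ℝ) :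
    (subDist p q).support ⊆ (p.support ×ˢ q.support).image fun z => z.1 - z.2 :=
  Finsupp.mapDomain_support.trans (image_subset_image (prodPMF_support_subset p q))

end Sub

theorem nonempty_fiber_of_mem_image {G H : Type*} [DecidableEq H] {f : G → H} {A : Finset G}
    {x : H} (hx : x ∈ A.image f) : {a ∈ A | f a = x}.Nonempty :=
  filter_nonempty_iff.2 (mem_image.1 hx)

theorem card_fiber_pos_of_mem_image {G H : Type*} [DecidableEq H] {f : G → H} {A : Finset G}
    {x : H} (hx : x ∈ A.image f) : (0 : ℝ) < {a ∈ A | f a = x}.card := by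
  exact_mod_cast (nonempty_fiber_of_mem_image hx).card_pos

section Fiber

variable {G H : Type*} [DecidableEq G] [DecidableEq H]

theorem unif_eq_sum_smul_unif_fiber (f : G → H) (A : Finset G) :
    unif A = ∑ x ∈ A.image f, Finsupp.mapDomain f (unif A) x • unif {a ∈ A | f a = x} := by
  ext a
  simp only [Finsupp.finsetSum_apply, Finsupp.smul_apply, smul_eq_mul, unif_apply,
    mapDomain_unif_apply, mem_filter]
  by_cases ha : a ∈ A
  · rw [sum_eq_single_of_mem (f a) (mem_image_of_mem f ha)
      fun x _ hx => by rw [if_neg fun h => hx h.2.symm, mul_zero]]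
    have := card_fiber_pos_of_mem_image (mem_image_of_mem f ha)
    rw [if_pos ha, if_pos (And.intro ha rfl)]
    field_simp
  · simp [ha]

theorem mapDomain_unif_apply_pos {f : G → H} {A : Finset G} {x : H} (hx : x ∈ A.image f) :
    0 < Finsupp.mapDomain f (unif A) x := by
  rw [mapDomain_unif_apply]
  exact div_pos (card_fiber_pos_of_mem_image hx)
    (by exact_mod_cast (image_nonempty.1 ⟨x, hx⟩).card_pos)

theorem sum_mapDomain_unif {f : G → H} {A : Finset G} (hA : A.Nonempty) :
    ∑ x ∈ A.image f, Finsupp.mapDomain f (unif A) x = 1 :=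
  ((isPMF_unif hA).mapDomain f).sum_eq_one
    (Finsupp.mapDomain_support.trans (image_subset_image (unif_support_subset A)))

theorem ent_mapDomain_unif (f : G → H) (A : Finset G) :
    ent (Finsupp.mapDomain f (unif A)) = ∑ x ∈ A.image f,
      Finsupp.mapDomain f (unif A) x * Real.log ((A.card : ℝ) / {a ∈ A | f a = x}.card) := by
  rw [ent_eq_sum_of_support_subset
    (Finsupp.mapDomain_support.trans (image_subset_image (unif_support_subset A)))]
  refine sum_congr rfl fun x _ => ?_
  rw [mapDomain_unif_apply, Real.negMulLog, ← inv_div ({a ∈ A | f a = x}.card : ℝ), Real.log_inv]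
  ring

theorem sum_mapDomain_unif_mul_ent_unif_fiber (f : G → H) {A : Finset G} (hA : A.Nonempty) :
    ∑ x ∈ A.image f, Finsupp.mapDomain f (unif A) x * ent (unif {a ∈ A | f a = x})
      = ent (unif A) - ent (Finsupp.mapDomain f (unif A)) := by
  have hA' : (0 : ℝ) < A.card := by exact_mod_cast hA.card_pos
  rw [ent_mapDomain_unif, ent_unif, eq_sub_iff_add_eq, ← sum_add_distrib,
    ← mul_one (Real.log A.card), ← sum_mapDomain_unif (f := f) hA, mul_sum]
  refine sum_congr rfl fun x hx => ?_
  rw [ent_unif, ← mul_add, Real.log_div hA'.ne' (card_fiber_pos_of_mem_image hx).ne', mul_comm]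
  ring

end Fiber

/-- The log-sum inequality: Jensen for `negMulLog` with the weights `c i / ∑ c`. -/
theorem sum_mul_negMulLog_le {ι : Type*} (T : Finset ι) {c v : ι → ℝ} (hc : ∀ i ∈ T, 0 ≤ c i)
    (hv : ∀ i ∈ T, 0 ≤ v i) :
    ∑ i ∈ T, c i * Real.negMulLog (v i)
      ≤ Real.negMulLog (∑ i ∈ T, c i * v i) + (∑ i ∈ T, c i * v i) * Real.log (∑ i ∈ T, c i) := by
  set m := ∑ i ∈ T, c i
  set w := ∑ i ∈ T, c i * v i
  rcases (sum_nonneg hc : 0 ≤ m).eq_or_lt with hm | hm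
  · have hc0 : ∀ i ∈ T, c i = 0 := (sum_eq_zero_iff_of_nonneg hc).1 hm.symm
    have hw : w = 0 := sum_eq_zero fun i hi => by rw [hc0 i hi, zero_mul]
    rw [hw, sum_eq_zero fun i hi => by rw [hc0 i hi, zero_mul]]
    simp
  have hjensen := Real.concaveOn_negMulLog.le_map_sum (t := T) (w := fun i => c i / m) (p := v)
    (fun i hi => div_nonneg (hc i hi) hm.le) (by rw [← sum_div, div_self hm.ne'])
    (fun i hi => hv i hi)
  simp only [smul_eq_mul, div_mul_eq_mul_div, ← sum_div] at hjensen
  have hscale : m * Real.negMulLog (w / m) = Real.negMulLog w + w * Real.log m := by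
    have h := Real.negMulLog_mul m (w / m)
    rw [mul_div_cancel₀ _ hm.ne'] at h
    have hm' : w / m * Real.negMulLog m = -(w * Real.log m) := by
      have hm0 : m ≠ 0 := hm.ne'
      rw [Real.negMulLog]
      field_simp
    linarith
  rwa [← hscale, ← div_le_iff₀' hm]

section Fibring

variable {ι σ κ : Type*}

theorem IsPMF.mapDomain_eq_single {p : σ →₀ ℝ} (hp : IsPMF p) {π : σ → κ} {z : κ}
    (hz : ∀ s ∈ p.support, π s = z) : Finsupp.mapDomain π p = Finsupp.single z 1 := by
  classical
  ext y
  rw [mapDomain_apply_eq_sum π subset_rfl y, Finsupp.single_apply]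
  split_ifs with h
  · rw [filter_true_of_mem fun s hs => (hz s hs).trans h, hp.2]
  · exact sum_eq_zero fun s hs => absurd ((hz s (mem_filter.1 hs).1).symm.trans
      (mem_filter.1 hs).2) h

theorem sum_mul_log_mapDomain_apply (π : σ → κ) {w : σ →₀ ℝ} {S : Finset σ}
    (hS : w.support ⊆ S) :
    ∑ s ∈ S, w s * Real.log (Finsupp.mapDomain π w (π s)) = -ent (Finsupp.mapDomain π w) := by
  classical
  rw [ent_eq_sum_of_support_subset (Finsupp.mapDomain_support.trans (image_subset_image hS)),
    ← sum_fiberwise_of_maps_to fun s hs => mem_image_of_mem π hs,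
    ← sum_neg_distrib]
  refine sum_congr rfl fun z _ => ?_
  rw [sum_congr rfl fun s hs => by rw [(mem_filter.1 hs).2], ← sum_mul,
    ← mapDomain_apply_eq_sum π hS, Real.negMulLog, neg_mul, neg_neg]

/-- If `W` is drawn from the component `ω I` of the mixture, with `π W = g I`, this says
`H(π W) + H(W | I) ≤ H(W)`. -/
theorem ent_mapDomain_add_sum_mul_ent_le (T : Finset ι) {c : ι → ℝ} {ω : ι → σ →₀ ℝ}
    (π : σ → κ) (g : ι → κ) (hc : ∀ i ∈ T, 0 ≤ c i) (hω : ∀ i ∈ T, IsPMF (ω i))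
    (hfib : ∀ i ∈ T, ∀ s ∈ (ω i).support, π s = g i) :
    ent (Finsupp.mapDomain π (∑ i ∈ T, c i • ω i)) + ∑ i ∈ T, c i * ent (ω i)
      ≤ ent (∑ i ∈ T, c i • ω i) := by
  classical
  set w := ∑ i ∈ T, c i • ω i
  set S := T.biUnion fun i => (ω i).support
  have hwS : w.support ⊆ S :=
    Finsupp.support_finsetSum.trans (biUnion_mono fun i _ => Finsupp.support_smul)
  have hm : ∀ z, Finsupp.mapDomain π w z = ∑ i ∈ T with g i = z, c i := by
    intro z
    rw [Finsupp.mapDomain_finsetSum, Finsupp.finsetSum_apply, sum_filter]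
    refine sum_congr rfl fun i hi => ?_
    rw [Finsupp.mapDomain_smul, (hω i hi).mapDomain_eq_single (hfib i hi), Finsupp.smul_apply,
      Finsupp.single_apply, smul_eq_mul]
    split_ifs <;> simp
  have hsum_fiber : ∀ s, ∀ F : ℝ → ℝ, F 0 = 0 →
      ∑ i ∈ T, c i * F (ω i s) = ∑ i ∈ T with g i = π s, c i * F (ω i s) := by
    intro s F hF
    rw [sum_filter]
    refine sum_congr rfl fun i hi => ?_
    split_ifs with h
    · rfl
    · rw [Finsupp.notMem_support_iff.1 fun hs => h (hfib i hi s hs).symm, hF, mul_zero]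
  have hpoint : ∀ s, ∑ i ∈ T, c i * Real.negMulLog (ω i s)
      ≤ Real.negMulLog (w s) + w s * Real.log (Finsupp.mapDomain π w (π s)) := by
    intro s
    have hw : w s = ∑ i ∈ T with g i = π s, c i * ω i s :=
      (by simp [w, Finsupp.finsetSum_apply] : w s = ∑ i ∈ T, c i * ω i s).trans (hsum_fiber s id rfl)
    rw [hsum_fiber s _ Real.negMulLog_zero, hw, hm]
    exact sum_mul_negMulLog_le _ (fun i hi => hc i (mem_filter.1 hi).1)
      fun i hi => (hω i (mem_filter.1 hi).1).1 s
  calc ent (Finsupp.mapDomain π w) + ∑ i ∈ T, c i * ent (ω i)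
      = -∑ s ∈ S, w s * Real.log (Finsupp.mapDomain π w (π s))
          + ∑ s ∈ S, ∑ i ∈ T, c i * Real.negMulLog (ω i s) := by
        rw [sum_mul_log_mapDomain_apply π hwS, neg_neg, sum_comm]
        congr 1
        refine sum_congr rfl fun i hi => ?_
        rw [ent_eq_sum_of_support_subset (subset_biUnion_of_mem (fun i => (ω i).support) hi),
          mul_sum]
    _ ≤ ∑ s ∈ S, Real.negMulLog (w s) := by
        rw [neg_add_le_iff_le_add, ← sum_add_distrib]
        exact sum_le_sum fun s _ => (hpoint s).trans_eq (add_comm _ _)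
    _ = ent w := (ent_eq_sum_of_support_subset hwS).symm

end Fibring

theorem sum_product_mul_mul_add {ι κ : Type*} {s : Finset ι} {t : Finset κ} {p : ι → ℝ}
    {q : κ → ℝ} (hp : ∑ i ∈ s, p i = 1) (hq : ∑ j ∈ t, q j = 1) (F : ι → ℝ) (G : κ → ℝ) :
    ∑ ij ∈ s ×ˢ t, p ij.1 * q ij.2 * (F ij.1 + G ij.2)
      = ∑ i ∈ s, p i * F i + ∑ j ∈ t, q j * G j := by
  rw [sum_product]
  calc ∑ i ∈ s, ∑ j ∈ t, p (i, j).1 * q (i, j).2 * (F (i, j).1 + G (i, j).2)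
      = ∑ i ∈ s, ∑ j ∈ t, (p i * F i * q j + q j * G j * p i) :=
        sum_congr rfl fun _ _ => sum_congr rfl fun _ _ => by ring
    _ = ∑ i ∈ s, p i * F i + ∑ j ∈ t, q j * G j := by
        simp only [sum_add_distrib, ← mul_sum, ← sum_mul, hp, hq, mul_one]

section Ruzsa

variable {G H : Type*} [AddCommGroup G] [AddCommGroup H] [DecidableEq G] [DecidableEq H]

theorem dEnt_mapDomain_unif_le (φ : G →+ H) {A B : Finset G} (hA : A.Nonempty)
    (hB : B.Nonempty) :
    dEnt (Finsupp.mapDomain φ (unif A)) (Finsupp.mapDomain φ (unif B))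
      ≤ dEnt (unif A) (unif B) - ∑ xy ∈ A.image φ ×ˢ B.image φ,
          Finsupp.mapDomain φ (unif A) xy.1 * Finsupp.mapDomain φ (unif B) xy.2
            * dEnt (unif {a ∈ A | φ a = xy.1}) (unif {b ∈ B | φ b = xy.2}) := by
  set p := Finsupp.mapDomain φ (unif A)
  set q := Finsupp.mapDomain φ (unif B)
  have hp : IsPMF p := (isPMF_unif hA).mapDomain φ
  have hq : IsPMF q := (isPMF_unif hB).mapDomain φ
  have hmix : subDist (unif A) (unif B) = ∑ xy ∈ A.image φ ×ˢ B.image φ,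
      (p xy.1 * q xy.2) • subDist (unif {a ∈ A | φ a = xy.1}) (unif {b ∈ B | φ b = xy.2}) := by
    conv_lhs => rw [unif_eq_sum_smul_unif_fiber φ A, unif_eq_sum_smul_unif_fiber φ B]
    exact subDist_sum_smul _ _ _ _ _ _
  have hfib := ent_mapDomain_add_sum_mul_ent_le (A.image φ ×ˢ B.image φ) φ
    (fun xy : H × H => xy.1 - xy.2) (fun xy _ => mul_nonneg (hp.1 xy.1) (hq.1 xy.2))
    (fun xy hxy => (isPMF_unif (nonempty_fiber_of_mem_image (mem_product.1 hxy).1)).subDist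
      (isPMF_unif (nonempty_fiber_of_mem_image (mem_product.1 hxy).2)))
    fun xy _ s hs => by
      obtain ⟨⟨a, b⟩, hab, rfl⟩ := mem_image.1 (subDist_support_subset _ _ hs)
      obtain ⟨ha, hb⟩ := mem_product.1 hab
      rw [map_sub, (mem_filter.1 (unif_support_subset _ ha)).2,
        (mem_filter.1 (unif_support_subset _ hb)).2]
  rw [← hmix, mapDomain_subDist] at hfib
  have hfibers := sum_product_mul_mul_add (sum_mapDomain_unif (f := φ) hA)
    (sum_mapDomain_unif (f := φ) hB) (fun x => ent (unif {a ∈ A | φ a = x}))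
    (fun y => ent (unif {b ∈ B | φ b = y}))
  rw [sum_mapDomain_unif_mul_ent_unif_fiber φ hA, sum_mapDomain_unif_mul_ent_unif_fiber φ hB]
    at hfibers
  have hsplit : ∑ xy ∈ A.image φ ×ˢ B.image φ,
      p xy.1 * q xy.2 * dEnt (unif {a ∈ A | φ a = xy.1}) (unif {b ∈ B | φ b = xy.2})
      = ∑ xy ∈ A.image φ ×ˢ B.image φ, p xy.1 * q xy.2
          * ent (subDist (unif {a ∈ A | φ a = xy.1}) (unif {b ∈ B | φ b = xy.2}))
        - (∑ xy ∈ A.image φ ×ˢ B.image φ, p xy.1 * q xy.2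
          * (ent (unif {a ∈ A | φ a = xy.1}) + ent (unif {b ∈ B | φ b = xy.2}))) / 2 := by
    rw [sum_div, ← sum_sub_distrib]
    exact sum_congr rfl fun xy _ => by rw [dEnt]; ring
  rw [hsplit, hfibers]
  simp only [dEnt] at hfib ⊢
  linarith

theorem sum_mul_log_card_div_card_fiber (φ : G →+ H) {A B : Finset G} (hA : A.Nonempty)
    (hB : B.Nonempty) :
    ∑ xy ∈ A.image φ ×ˢ B.image φ,
        Finsupp.mapDomain φ (unif A) xy.1 * Finsupp.mapDomain φ (unif B) xy.2
          * Real.log ((A.card : ℝ) / {a ∈ A | φ a = xy.1}.card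
              * ((B.card : ℝ) / {b ∈ B | φ b = xy.2}.card))
      = ent (Finsupp.mapDomain φ (unif A)) + ent (Finsupp.mapDomain φ (unif B)) := by
  rw [ent_mapDomain_unif, ent_mapDomain_unif,
    ← sum_product_mul_mul_add (sum_mapDomain_unif hA) (sum_mapDomain_unif hB)]
  refine sum_congr rfl fun xy hxy => ?_
  obtain ⟨hx, hy⟩ := mem_product.1 hxy
  rw [Real.log_mul (div_pos (by exact_mod_cast hA.card_pos) (card_fiber_pos_of_mem_image hx)).ne'
    (div_pos (by exact_mod_cast hB.card_pos) (card_fiber_pos_of_mem_image hy)).ne']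

end Ruzsa

theorem exists_mul_le_mul_sub_of_sum_le {ι : Type*} {T : Finset ι} (hT : T.Nonempty)
    {c d L : ι → ℝ} {k k' M : ℝ} (hc : ∀ i ∈ T, 0 < c i) (hc1 : ∑ i ∈ T, c i = 1)
    (hM : 0 ≤ M) (hL : ∑ i ∈ T, c i * L i = M) (hk : k' ≤ k - ∑ i ∈ T, c i * d i) :
    ∃ i ∈ T, k' * L i ≤ M * (k - d i) := by
  obtain ⟨i, hi, h⟩ := exists_le_of_sum_le hT (f := fun i => c i * (k' * L i))
    (g := fun i => c i * (M * (k - d i))) <| calc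
      ∑ i ∈ T, c i * (k' * L i) = k' * M := by
        rw [← hL, mul_sum]
        exact sum_congr rfl fun _ _ => by ring
      _ ≤ M * (k - ∑ i ∈ T, c i * d i) := by nlinarith
      _ = ∑ i ∈ T, c i * (M * (k - d i)) := by
        rw [mul_sub, ← mul_one (M * k), ← hc1, mul_sum, mul_sum,
          ← sum_sub_distrib]
        exact sum_congr rfl fun _ _ => by ring
  exact ⟨i, hi, le_of_mul_le_mul_left h (hc i hi)⟩

/-- Let `φ : G → H` be a homomorphism of abelian groups and `A, B ⊆ G`
finite non-empty subsets, with fibers `A_x = A ∩ φ⁻¹(x)`, `B_y = B ∩ φ⁻¹(y)` and fiber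
densities `α_x = |A_x|/|A|`, `β_y = |B_y|/|B|`. With `k = d_ent(U_A, U_B)`,
`k̄ = d_ent(φ(U_A), φ(U_B))` and `M = H(φ(U_A)) + H(φ(U_B))`, there exist `x, y ∈ H` with
`A_x, B_y` non-empty and `k̄ log(1/(α_x β_y)) ≤ M (k - d_ent(U_{A_x}, U_{B_y}))`. -/
theorem statement19 {G H : Type*} [AddCommGroup G] [AddCommGroup H]
    [DecidableEq G] [DecidableEq H]
    (φ : G →+ H) (A B : Finset G) (hA : A.Nonempty) (hB : B.Nonempty) :
    ∃ x y : H, (A.filter fun a => φ a = x).Nonempty ∧ (B.filter fun b => φ b = y).Nonempty ∧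
      dEnt (Finsupp.mapDomain φ (unif A)) (Finsupp.mapDomain φ (unif B)) *
          Real.log (((A.card : ℝ) / ((A.filter fun a => φ a = x).card : ℝ)) *
            ((B.card : ℝ) / ((B.filter fun b => φ b = y).card : ℝ)))
        ≤ (ent (Finsupp.mapDomain φ (unif A)) + ent (Finsupp.mapDomain φ (unif B))) *
            (dEnt (unif A) (unif B) -
              dEnt (unif (A.filter fun a => φ a = x)) (unif (B.filter fun b => φ b = y))) := by
  set p := Finsupp.mapDomain φ (unif A)
  set q := Finsupp.mapDomain φ (unif B)
  obtain ⟨⟨x, y⟩, hxy, h⟩ := exists_mul_le_mul_sub_of_sum_le ((hA.image φ).product (hB.image φ))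
    (c := fun xy => p xy.1 * q xy.2)
    (fun xy hxy => mul_pos (mapDomain_unif_apply_pos (mem_product.1 hxy).1)
      (mapDomain_unif_apply_pos (mem_product.1 hxy).2))
    (by rw [sum_product, ← sum_mul_sum, sum_mapDomain_unif hA,
      sum_mapDomain_unif hB, one_mul])
    (add_nonneg ((isPMF_unif hA).mapDomain φ).ent_nonneg ((isPMF_unif hB).mapDomain φ).ent_nonneg)
    (sum_mul_log_card_div_card_fiber φ hA hB) (dEnt_mapDomain_unif_le φ hA hB)
  obtain ⟨hx, hy⟩ := mem_product.1 hxy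
  exact ⟨x, y, nonempty_fiber_of_mem_image hx, nonempty_fiber_of_mem_image hy, h⟩

end
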